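/- arXiv:2210.11402 — 5 statements merged into one kernel-verified Lean document; each statement's English description precedes it below -/
import Mathlib

section
/- Equivalence of never-Δ-best-response and Δ-dominance: In a finite game, suppose action a ∈ A_i is never a Δ-best response, i.e., for every correlated belief Π_{-i} ∈ Δ(∏_{j≠i} A_j) there exists a mixed strategy x ∈ Δ(A_i) with u_i(a, Π_{-i}) ≤ u_i(x, Π_{-i}) − Δ. Then a is Δ-dominated: there exists a single mixed strategy x ∈ Δ(A_i) such that for all beliefs Π_{-i}, u_i(a, Π_{-i}) ≤ u_i(x, Π_{-i}) − Δ. (The proof uses von Neumann's minimax theorem applied to the two-player zero-sum game with payoff u_i(a,·) − u_i(·,·).) -/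
/-!
Write `M a b = u a b - u a0 b` for the advantage of `a` over `a0` against `b`; the claim is the
minimax theorem for the zero-sum game `M`. If no mixed `x` had advantage at least `Δ` against
every `b`, the compact convex set `{x ᵥ* M | x mixed}` would miss the closed convex orthant
`{w | ∀ b, Δ ≤ w b}`. A hyperplane strictly separating them is bounded below on the orthant, hence
has nonnegative coefficients; normalized, it is a belief `π` with `π ⬝ᵥ (x ᵥ* M) < Δ` for every
mixed `x`, contradicting the hypothesis at `π`.
-/

/-- The set of mixed strategies (probability vectors) over a finite set. -/
def mixed (α : Type*) [Fintype α] : Set (α → ℝ) :=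
  {x | (∀ a, 0 ≤ x a) ∧ ∑ a, x a = 1}

open Matrix

theorem mixed_eq_stdSimplex (α : Type*) [Fintype α] : mixed α = stdSimplex ℝ α := rfl

theorem nonneg_of_forall_lt_add_mul {A d p : ℝ} (h : ∀ t, 0 ≤ t → d < A + t * p) : 0 ≤ p := by
  by_contra! hp
  have hdA : d < A := by simpa using h 0 le_rfl
  have hray : (A - d) / -p * p = d - A := by rw [div_neg, neg_mul, div_mul_cancel₀ _ hp.ne]; ring
  have := h ((A - d) / -p) (div_nonneg (sub_nonneg.2 hdA.le) (neg_nonneg.2 hp.le))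
  linarith

section Simplex

variable {β : Type*} [Fintype β]

theorem le_dotProduct_of_mem_stdSimplex {Δ : ℝ} {π w : β → ℝ} (hπ : π ∈ stdSimplex ℝ β)
    (hw : ∀ b, Δ ≤ w b) : Δ ≤ π ⬝ᵥ w :=
  calc Δ = π ⬝ᵥ fun _ => Δ := by simp [dotProduct, ← Finset.sum_mul, hπ.2]
    _ ≤ π ⬝ᵥ w := Finset.sum_le_sum fun b _ => mul_le_mul_of_nonneg_left (hw b) (hπ.1 b)

theorem Module.Dual.apply_eq_dotProduct [DecidableEq β] (f : Module.Dual ℝ (β → ℝ))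
    (w : β → ℝ) : f w = (dotProductEquiv ℝ β).symm f ⬝ᵥ w := by
  conv_lhs => rw [← (dotProductEquiv ℝ β).apply_symm_apply f]
  rfl

theorem exists_mem_stdSimplex_dotProduct_lt_of_disjoint {V : Set (β → ℝ)} {Δ : ℝ}
    (hVconv : Convex ℝ V) (hVcpt : IsCompact V) (hVne : V.Nonempty)
    (hdisj : Disjoint V (Set.univ.pi fun _ => Set.Ici Δ)) :
    ∃ π ∈ stdSimplex ℝ β, ∀ v ∈ V, π ⬝ᵥ v < Δ := by
  classical
  obtain ⟨f, c, d, hfV, hcd, hfK⟩ := geometric_hahn_banach_compact_closed hVconv hVcpt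
    (convex_pi fun _ _ => convex_Ici Δ) (isClosed_set_pi fun _ _ => isClosed_Ici) hdisj
  set p := (dotProductEquiv ℝ β).symm f.toLinearMap
  have hf (w : β → ℝ) : f w = p ⬝ᵥ w := Module.Dual.apply_eq_dotProduct f.toLinearMap w
  have hK (w : β → ℝ) (hw : ∀ b, Δ ≤ w b) : d < f w := hfK w fun b _ => hw b
  set s := ∑ b, p b
  have hfΔ : f (fun _ => Δ) = s * Δ := by simp [hf, dotProduct, s, Finset.sum_mul]
  have hp (b : β) : 0 ≤ p b := nonneg_of_forall_lt_add_mul fun t ht => by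
    have := hK ((fun _ => Δ) + t • Pi.single b 1) fun b' => by
      rcases eq_or_ne b' b with rfl | hne
      · simpa using ht
      · simp [hne]
    rwa [map_add, map_smul, hf (Pi.single b 1), dotProduct_single, mul_one, smul_eq_mul] at this
  have hsep (v : β → ℝ) (hv : v ∈ V) : f v < f (fun _ => Δ) :=
    (hfV v hv).trans (hcd.trans (hK _ fun _ => le_rfl))
  have hs : 0 < s := by
    refine (Finset.sum_nonneg fun b _ => hp b).lt_of_ne fun hs0 => ?_
    obtain ⟨v, hv⟩ := hVne
    have hp0 : p = 0 := funext fun b =>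
      (Finset.sum_eq_zero_iff_of_nonneg fun b _ => hp b).1 hs0.symm b (Finset.mem_univ b)
    simpa [hf, hp0] using hsep v hv
  refine ⟨s⁻¹ • p, ⟨fun b => mul_nonneg (inv_nonneg.2 hs.le) (hp b),
    by simp [← Finset.mul_sum, s, hs.ne']⟩, fun v hv => ?_⟩
  calc s⁻¹ • p ⬝ᵥ v = s⁻¹ * f v := by rw [smul_dotProduct, hf, smul_eq_mul]
    _ < s⁻¹ * f (fun _ => Δ) := mul_lt_mul_of_pos_left (hsep v hv) (inv_pos.2 hs)
    _ = Δ := by rw [hfΔ, inv_mul_cancel_left₀ hs.ne']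

end Simplex

section Game

variable {α β : Type*} [Fintype α] [Fintype β]

theorem exists_mem_stdSimplex_forall_le_vecMul [Nonempty α] (M : Matrix α β ℝ) (Δ : ℝ)
    (h : ∀ π ∈ stdSimplex ℝ β, ∃ x ∈ stdSimplex ℝ α, Δ ≤ π ⬝ᵥ (x ᵥ* M)) :
    ∃ x ∈ stdSimplex ℝ α, ∀ b, Δ ≤ (x ᵥ* M) b := by
  by_contra! hcon
  have hdisj : Disjoint (vecMulLinear M '' stdSimplex ℝ α) (Set.univ.pi fun _ => Set.Ici Δ) := by
    refine Set.disjoint_left.2 ?_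
    rintro _ ⟨x, hx, rfl⟩ hK
    obtain ⟨b, hb⟩ := hcon x hx
    exact hb.not_ge (hK b trivial)
  obtain ⟨π, hπ, hlt⟩ := exists_mem_stdSimplex_dotProduct_lt_of_disjoint
    ((convex_stdSimplex ℝ α).linear_image _)
    ((isCompact_stdSimplex ℝ α).image (vecMulLinear M).continuous_of_finiteDimensional)
    ((isPathConnected_stdSimplex α).nonempty.image _) hdisj
  obtain ⟨x, hx, hle⟩ := h π hπ
  exact (hle.trans_lt (hlt _ ⟨x, hx, rfl⟩)).false

theorem dotProduct_vecMul_sub_row (u : α → β → ℝ) (a0 : α) {x : α → ℝ} (hx : ∑ a, x a = 1)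
    (π : β → ℝ) :
    π ⬝ᵥ (x ᵥ* fun a b => u a b - u a0 b) = (∑ a, x a * ∑ b, π b * u a b) - ∑ b, π b * u a0 b := by
  simp only [dotProduct, vecMul, mul_sub, Finset.sum_sub_distrib, Finset.mul_sum]
  rw [Finset.sum_comm]
  congr 1
  · exact Finset.sum_congr rfl fun a _ => Finset.sum_congr rfl fun b _ => by ring
  · refine Finset.sum_congr rfl fun b _ => ?_
    rw [← Finset.mul_sum, ← Finset.sum_mul, hx, one_mul]

end Game

theorem never_best_response_iff_dominated_general
    {α β : Type*} [Fintype α] [Fintype β]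
    (u : α → β → ℝ) (Δ : ℝ) (a0 : α)
    (h : ∀ π ∈ mixed β, ∃ x ∈ mixed α,
      (∑ b, π b * u a0 b) ≤ (∑ a, x a * ∑ b, π b * u a b) - Δ) :
    ∃ x ∈ mixed α, ∀ π ∈ mixed β,
      (∑ b, π b * u a0 b) ≤ (∑ a, x a * ∑ b, π b * u a b) - Δ := by
  have : Nonempty α := ⟨a0⟩
  simp only [mixed_eq_stdSimplex] at h ⊢
  obtain ⟨x, hx, hdom⟩ := exists_mem_stdSimplex_forall_le_vecMul (fun a b => u a b - u a0 b) Δ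
    fun π hπ => by
      obtain ⟨x, hx, hle⟩ := h π hπ
      exact ⟨x, hx, by rw [dotProduct_vecMul_sub_row u a0 hx.2]; linarith⟩
  refine ⟨x, hx, fun π hπ => ?_⟩
  have := le_dotProduct_of_mem_stdSimplex hπ hdom
  rw [dotProduct_vecMul_sub_row u a0 hx.2] at this
  linarith

/-- Equivalence of never-`Δ`-best-response and `Δ`-dominance: if for every
correlated belief `π` over the opponents' joint action set `β` there is a mixed
strategy beating action `a0` by at least `Δ`, then there is a single mixed
strategy `x` beating `a0` by at least `Δ` against every belief. -/
theorem never_best_response_iff_dominated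
    {α β : Type*} [Fintype α] [Fintype β] [Nonempty α] [Nonempty β]
    (u : α → β → ℝ) (Δ : ℝ) (a0 : α)
    (h : ∀ π ∈ mixed β, ∃ x ∈ mixed α,
      (∑ b, π b * u a0 b) ≤ (∑ a, x a * ∑ b, π b * u a b) - Δ) :
    ∃ x ∈ mixed α, ∀ π ∈ mixed β,
      (∑ b, π b * u a0 b) ≤ (∑ a, x a * ∑ b, π b * u a b) - Δ :=
  never_best_response_iff_dominated_general u Δ a0 h
end

section
/- Support of approximate Nash on iteratively dominated actions: if x* is an ε-Nash equilibrium with ε < Δ²/(24 N² A), then for every player i and every elimination level l ≤ L, the probability under x*_i of playing an action in E_l is at most 2lε/Δ. -/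
/-- Action `a` of player `i` is `Δ`-dominated by some mixed strategy against all
opposing action profiles avoiding the set `E`. -/
def Dominated {N : ℕ} {A : Fin N → Type*} [∀ i, Fintype (A i)]
    (u : ∀ i : Fin N, (∀ j, A j) → ℝ) (Δ : ℝ) (E : Set ((i : Fin N) × A i))
    (i : Fin N) (a : A i) : Prop :=
  ∃ x ∈ mixed (A i), ∀ p : ∀ j, A j,
    (∀ j, j ≠ i → (⟨j, p j⟩ : (k : Fin N) × A k) ∉ E) →
    u i (Function.update p i a) ≤ (∑ b, x b * u i (Function.update p i b)) - Δ

/-- `Elim u Δ l` is the (cumulative) set `E_l` of actions eliminated by round `l`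
of `Δ`-iterated dominance elimination. -/
def Elim {N : ℕ} {A : Fin N → Type*} [∀ i, Fintype (A i)]
    (u : ∀ i : Fin N, (∀ j, A j) → ℝ) (Δ : ℝ) : ℕ → Set ((i : Fin N) × A i)
  | 0 => ∅
  | (l + 1) => Elim u Δ l ∪ {ia | Dominated u Δ (Elim u Δ l) ia.1 ia.2}

/-- Expected utility of `f` under a product of mixed strategies `x`. -/
noncomputable def EU {N : ℕ} {A : Fin N → Type*} [∀ i, Fintype (A i)]
    (f : (∀ j, A j) → ℝ) (x : ∀ j, A j → ℝ) : ℝ :=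
  ∑ p : ∀ j, A j, (∏ j, x j (p j)) * f p

/-!
Induction on the elimination level `l`. If every player puts mass at most `2lε/Δ` on `E_l`,
then player `i`'s opponents together play into `E_l` with probability at most `2Nlε/Δ`, which
the smallness of `ε` and `l ≤ L ≤ N·A` keep below `Δ/4`. Player `i` may replace each action of
`E_{l+1}` by a mixed strategy dominating it against profiles avoiding `E_l`: this gains at
least `Δ` against such profiles and loses at most `1` otherwise, hence gains at least
`Δ/2` per unit of mass moved. Since `x` is an `ε`-equilibrium, that mass is at most `2ε/Δ`.
-/

open Finset Function

theorem Fintype.sum_sum_update {ι : Type*} [Fintype ι] [DecidableEq ι] {β : ι → Type*}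
    [∀ i, Fintype (β i)] {M : Type*} [AddCommMonoid M] (i : ι) (F : (∀ j, β j) → β i → M) :
    ∑ p : ∀ j, β j, ∑ b, F p b = ∑ p : ∀ j, β j, ∑ b, F (update p i b) (p i) := by
  simp only [← Fintype.sum_prod_type']
  refine Fintype.sum_bijective (fun z => (update z.1 i z.2, z.1 i))
    (Involutive.bijective fun z => ?_) _ _ fun z => ?_ <;> simp

section Mixed

variable {α β : Type*} [Fintype α] [Fintype β]

lemma mixed.nonempty {x : α → ℝ} (hx : x ∈ mixed α) : Nonempty α := by
  by_contra h
  rw [not_nonempty_iff] at h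
  simpa using hx.2

lemma mixed.single [DecidableEq α] (a : α) : Pi.single a 1 ∈ mixed α :=
  ⟨fun b => by by_cases h : b = a <;> simp [h], by simp⟩

lemma mixed.sum_mul_mem {w : α → ℝ} (hw : w ∈ mixed α) {σ : α → β → ℝ}
    (hσ : ∀ a, σ a ∈ mixed β) : (fun b => ∑ a, w a * σ a b) ∈ mixed β := by
  refine ⟨fun b => sum_nonneg fun a _ => mul_nonneg (hw.1 a) ((hσ a).1 b), ?_⟩
  rw [sum_comm]
  simp [← mul_sum, (hσ _).2, hw.2]

lemma mixed.sum_mul_le_one {w : α → ℝ} (hw : w ∈ mixed α) {f : α → ℝ} (hf : ∀ a, f a ≤ 1) :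
    ∑ a, w a * f a ≤ 1 :=
  calc ∑ a, w a * f a ≤ ∑ a, w a := sum_le_sum fun a _ => mul_le_of_le_one_right (hw.1 a) (hf a)
    _ = 1 := hw.2

end Mixed

section Profiles

variable {N : ℕ} {A : Fin N → Type*}

lemma prod_apply_update (x : ∀ j, A j → ℝ) (p : ∀ j, A j) (i : Fin N) (a : A i) :
    ∏ j, x j (update p i a j) = x i a * ∏ j ∈ univ.erase i, x j (p j) := by
  rw [← mul_prod_erase univ _ (mem_univ i), update_self]
  congr 1
  exact prod_congr rfl fun j hj => by rw [update_of_ne (ne_of_mem_erase hj)]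

lemma prod_update_apply (x : ∀ j, A j → ℝ) (p : ∀ j, A j) (i : Fin N) (z : A i → ℝ) :
    ∏ j, update x i z j (p j) = z (p i) * ∏ j ∈ univ.erase i, x j (p j) := by
  rw [← mul_prod_erase univ _ (mem_univ i), update_self]
  congr 1
  exact prod_congr rfl fun j hj => by rw [update_of_ne (ne_of_mem_erase hj)]

/-- Its expectation bounds the probability that some opponent of `i` plays into `S`
(union bound). -/
noncomputable def oppCount (S : Set ((i : Fin N) × A i)) (i : Fin N) (p : ∀ j, A j) : ℝ :=
  ∑ j ∈ univ.erase i, S.indicator (fun _ => 1) ⟨j, p j⟩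

lemma oppCount_eq_zero {S : Set ((i : Fin N) × A i)} {i : Fin N} {p : ∀ j, A j}
    (hp : ∀ j, j ≠ i → (⟨j, p j⟩ : (k : Fin N) × A k) ∉ S) : oppCount S i p = 0 :=
  sum_eq_zero fun j hj => Set.indicator_of_notMem (hp j (ne_of_mem_erase hj)) _

lemma one_le_oppCount {S : Set ((i : Fin N) × A i)} {i : Fin N} {p : ∀ j, A j}
    (hp : ¬ ∀ j, j ≠ i → (⟨j, p j⟩ : (k : Fin N) × A k) ∉ S) : 1 ≤ oppCount S i p := by
  simp only [not_forall, not_not] at hp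
  obtain ⟨j, hji, hj⟩ := hp
  calc (1 : ℝ) = S.indicator (fun _ => 1) ⟨j, p j⟩ := by simp [hj]
    _ ≤ oppCount S i p := single_le_sum (f := fun j => S.indicator (fun _ => 1) ⟨j, p j⟩)
      (fun _ _ => Set.indicator_nonneg (fun _ _ => zero_le_one) _) (mem_erase.mpr ⟨hji, mem_univ j⟩)

end Profiles

section Expectation

variable {N : ℕ} {A : Fin N → Type*} [∀ i, Fintype (A i)] {x : ∀ j, A j → ℝ}

lemma EU_const (hx : ∀ j, ∑ a, x j a = 1) (c : ℝ) : EU (fun _ => c) x = c := by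
  simp [EU, ← sum_mul, ← Fintype.prod_sum, hx]

lemma EU_sub (f g : (∀ j, A j) → ℝ) (x : ∀ j, A j → ℝ) :
    EU (fun p => f p - g p) x = EU f x - EU g x := by
  simp only [EU, mul_sub, sum_sub_distrib]

lemma EU_const_sub_mul (hx : ∀ j, ∑ a, x j a = 1) (c d : ℝ) (f : (∀ j, A j) → ℝ) :
    EU (fun p => c - d * f p) x = c - d * EU f x := by
  rw [EU_sub, EU_const hx]
  simp only [EU, mul_sum]
  congr 1
  exact sum_congr rfl fun p _ => by ring

lemma EU_sum {ι : Type*} (s : Finset ι) (f : ι → (∀ j, A j) → ℝ) (x : ∀ j, A j → ℝ) :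
    EU (fun p => ∑ k ∈ s, f k p) x = ∑ k ∈ s, EU (f k) x := by
  simp only [EU, mul_sum]
  exact sum_comm

lemma EU_mono (hx : ∀ j, x j ∈ mixed (A j)) {f g : (∀ j, A j) → ℝ} (h : ∀ p, f p ≤ g p) :
    EU f x ≤ EU g x :=
  sum_le_sum fun p _ => mul_le_mul_of_nonneg_left (h p) (prod_nonneg fun j _ => (hx j).1 _)

/-- The right-hand side still draws `p i` from `x i`, but its integrand ignores `p i`. -/
lemma EU_update {i : Fin N} (hx : ∑ a, x i a = 1) (f : (∀ j, A j) → ℝ) (z : A i → ℝ) :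
    EU f (update x i z) = EU (fun p => ∑ b, z b * f (update p i b)) x := by
  simp only [EU, mul_sum]
  rw [Fintype.sum_sum_update i]
  refine sum_congr rfl fun p _ => ?_
  simp only [prod_apply_update, prod_update_apply, update_idem, update_eq_self, ← sum_mul, hx]
  ring

lemma EU_apply_eval (hx : ∀ j, ∑ a, x j a = 1) (i : Fin N) (h : A i → ℝ) :
    EU (fun p => h (p i)) x = ∑ a, x i a * h a := by
  conv_lhs => rw [← update_eq_self i x]
  rw [EU_update (hx i)]
  simp only [update_self]
  exact EU_const hx _

lemma EU_update_sum_mul_sub {i : Fin N} (hx : ∑ a, x i a = 1) (f : (∀ j, A j) → ℝ)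
    (σ : A i → A i → ℝ) :
    EU f (update x i fun b => ∑ a, x i a * σ a b) - EU f x =
      EU (fun p => ∑ a, x i a * (∑ b, σ a b * f (update p i b) - f (update p i a))) x := by
  have hx' : EU f x = EU (fun p => ∑ a, x i a * f (update p i a)) x := by
    simpa using EU_update hx f (x i)
  rw [EU_update hx, hx', ← EU_sub]
  congr 1
  funext p
  simp only [mul_sub, sum_sub_distrib, sum_mul, mul_sum, mul_assoc]
  rw [sum_comm]

noncomputable def mass (x : ∀ j, A j → ℝ) (S : Set ((i : Fin N) × A i)) (i : Fin N) : ℝ :=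
  ∑ a : A i, Set.indicator {a : A i | (⟨i, a⟩ : (k : Fin N) × A k) ∈ S} (x i) a

lemma mass_nonneg {i : Fin N} (hx : x i ∈ mixed (A i)) (S : Set ((i : Fin N) × A i)) :
    0 ≤ mass x S i :=
  sum_nonneg fun _ _ => Set.indicator_nonneg (fun a _ => hx.1 a) _

lemma mass_mono {i : Fin N} (hx : x i ∈ mixed (A i)) {S T : Set ((i : Fin N) × A i)}
    (hST : S ⊆ T) : mass x S i ≤ mass x T i :=
  sum_le_sum fun _ _ =>
    Set.indicator_le_indicator_of_subset (fun a (h : (⟨i, a⟩ : (k : Fin N) × A k) ∈ S) => hST h)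
      (fun a => hx.1 a) _

lemma sum_mul_indicator_eq_mass_mul (x : ∀ j, A j → ℝ) (S : Set ((i : Fin N) × A i))
    (i : Fin N) (c : ℝ) : ∑ a : A i, x i a * S.indicator (fun _ => c) ⟨i, a⟩ = mass x S i * c := by
  classical
  rw [mass, sum_mul]
  exact sum_congr rfl fun a _ => by
    by_cases h : (⟨i, a⟩ : (k : Fin N) × A k) ∈ S <;> simp [h]

lemma EU_oppCount (hx : ∀ j, ∑ a, x j a = 1) (S : Set ((i : Fin N) × A i)) (i : Fin N) :
    EU (oppCount S i) x = ∑ j ∈ univ.erase i, mass x S j := by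
  unfold oppCount
  rw [EU_sum]
  refine sum_congr rfl fun j _ => ?_
  rw [EU_apply_eval hx j (fun b => S.indicator (fun _ => 1) ⟨j, b⟩),
    sum_mul_indicator_eq_mass_mul, mul_one]

end Expectation

section Elimination

variable {N : ℕ} {A : Fin N → Type*} [∀ i, Fintype (A i)] {u : Fin N → (∀ j, A j) → ℝ} {Δ : ℝ}

lemma Dominated.mono {E E' : Set ((i : Fin N) × A i)} (hE : E ⊆ E') {i : Fin N} {a : A i}
    (h : Dominated u Δ E i a) : Dominated u Δ E' i a :=
  let ⟨y, hy, hdom⟩ := h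
  ⟨y, hy, fun p hp => hdom p fun j hj hm => hp j hj (hE hm)⟩

lemma Dominated.le_one {E : Set ((i : Fin N) × A i)} {i : Fin N} {a : A i}
    (hu : ∀ p, 0 ≤ u i p ∧ u i p ≤ 1) (h : Dominated u Δ E i a) {p : ∀ j, A j}
    (hp : ∀ j, j ≠ i → (⟨j, p j⟩ : (k : Fin N) × A k) ∉ E) : Δ ≤ 1 := by
  obtain ⟨y, hy, hdom⟩ := h
  linarith [hdom p hp, (hu (update p i a)).1,
    mixed.sum_mul_le_one hy fun b => (hu (update p i b)).2]

lemma Elim_subset_succ (l : ℕ) : Elim u Δ l ⊆ Elim u Δ (l + 1) :=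
  Set.subset_union_left

lemma dominated_of_mem_Elim_succ {l : ℕ} {i : Fin N} {a : A i}
    (h : (⟨i, a⟩ : (k : Fin N) × A k) ∈ Elim u Δ (l + 1)) : Dominated u Δ (Elim u Δ l) i a := by
  induction l with
  | zero => simpa [Elim] using h
  | succ l ih =>
    rcases h with h | h
    · exact Dominated.mono (Elim_subset_succ l) (ih h)
    · exact h

noncomputable def elimLength (u : Fin N → (∀ j, A j) → ℝ) (Δ : ℝ) : ℕ :=
  sInf {l' : ℕ | Elim u Δ (l' + 1) = Elim u Δ l'}

lemma Elim_ssubset_succ {l : ℕ} (hl : l < elimLength u Δ) : Elim u Δ l ⊂ Elim u Δ (l + 1) :=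
  (Elim_subset_succ l).ssubset_of_ne fun h => Nat.notMem_of_lt_sInf hl h.symm

lemma le_ncard_Elim {l : ℕ} (hl : l ≤ elimLength u Δ) : l ≤ (Elim u Δ l).ncard := by
  induction l with
  | zero => exact Nat.zero_le _
  | succ l ih =>
    have hlt := Set.ncard_lt_ncard (Elim_ssubset_succ hl) (Set.toFinite _)
    have := ih (Nat.le_of_succ_le hl)
    omega

lemma ncard_le_mul {Acard : ℕ} (hcard : ∀ i, Fintype.card (A i) ≤ Acard)
    (s : Set ((i : Fin N) × A i)) : s.ncard ≤ N * Acard :=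
  calc s.ncard ≤ Nat.card ((i : Fin N) × A i) := Set.ncard_le_card s
    _ = ∑ i, Fintype.card (A i) := by rw [Nat.card_eq_fintype_card, Fintype.card_sigma]
    _ ≤ ∑ _i : Fin N, Acard := sum_le_sum fun i _ => hcard i
    _ = N * Acard := by simp

lemma elimLength_le_mul {Acard : ℕ} (hcard : ∀ i, Fintype.card (A i) ≤ Acard) :
    elimLength u Δ ≤ N * Acard :=
  (le_ncard_Elim le_rfl).trans (ncard_le_mul hcard _)

lemma le_one_of_elimLength_pos [∀ j, Nonempty (A j)] (hu : ∀ i p, 0 ≤ u i p ∧ u i p ≤ 1)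
    (hL : 0 < elimLength u Δ) : Δ ≤ 1 := by
  obtain ⟨⟨i, a⟩, ha, -⟩ := Set.exists_of_ssubset (Elim_ssubset_succ hL)
  exact Dominated.le_one (hu i) (dominated_of_mem_Elim_succ ha)
    (p := fun _ => Classical.arbitrary _) fun _ _ => Set.notMem_empty _

end Elimination

section Deviation

variable {N : ℕ} {A : Fin N → Type*} [∀ i, Fintype (A i)] {u : Fin N → (∀ j, A j) → ℝ} {Δ : ℝ}

def dominatedSet (u : Fin N → (∀ j, A j) → ℝ) (Δ : ℝ) (E : Set ((i : Fin N) × A i)) :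
    Set ((i : Fin N) × A i) :=
  {ia | Dominated u Δ E ia.1 ia.2}

open scoped Classical in
noncomputable def improvement (u : Fin N → (∀ j, A j) → ℝ) (Δ : ℝ)
    (E : Set ((i : Fin N) × A i)) (i : Fin N) (a : A i) : A i → ℝ :=
  if h : Dominated u Δ E i a then h.choose else Pi.single a 1

variable {E : Set ((i : Fin N) × A i)} {i : Fin N}

lemma improvement_mem_mixed (a : A i) : improvement u Δ E i a ∈ mixed (A i) := by
  classical
  unfold improvement
  split_ifs with h
  · exact h.choose_spec.1
  · convert mixed.single a

lemma improvement_of_not_dominated {a : A i} (h : ¬ Dominated u Δ E i a) (f : A i → ℝ) :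
    ∑ b, improvement u Δ E i a b * f b = f a := by
  classical
  simp [improvement, h, Pi.single_apply]

lemma improvement_gain (hu : ∀ p, 0 ≤ u i p ∧ u i p ≤ 1) (hΔ : 0 ≤ Δ) (a : A i)
    (p : ∀ j, A j) :
    (dominatedSet u Δ E).indicator (fun _ => Δ - (1 + Δ) * oppCount E i p) ⟨i, a⟩ ≤
      ∑ b, improvement u Δ E i a b * u i (update p i b) - u i (update p i a) := by
  classical
  by_cases hD : Dominated u Δ E i a
  · rw [Set.indicator_of_mem (show (⟨i, a⟩ : (k : Fin N) × A k) ∈ dominatedSet u Δ E from hD)]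
    by_cases hp : ∀ j, j ≠ i → (⟨j, p j⟩ : (k : Fin N) × A k) ∉ E
    · have hdom := hD.choose_spec.2 p hp
      simp only [improvement, dif_pos hD, oppCount_eq_zero hp]
      linarith
    · have hcount := mul_le_mul_of_nonneg_left (one_le_oppCount hp) (by linarith : 0 ≤ 1 + Δ)
      have hnonneg : 0 ≤ ∑ b, improvement u Δ E i a b * u i (update p i b) :=
        sum_nonneg fun b _ => mul_nonneg ((improvement_mem_mixed a).1 b) (hu _).1
      linarith [(hu (update p i a)).2]
  · rw [Set.indicator_of_notMem (show (⟨i, a⟩ : (k : Fin N) × A k) ∉ dominatedSet u Δ E from hD),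
      improvement_of_not_dominated hD, sub_self]

theorem mass_dominatedSet_le {x : ∀ j, A j → ℝ} {ε : ℝ} (hu : ∀ p, 0 ≤ u i p ∧ u i p ≤ 1)
    (hΔ : 0 < Δ) (hΔ1 : Δ ≤ 1) (hx : ∀ j, x j ∈ mixed (A j))
    (hNash : ∀ x' ∈ mixed (A i), EU (u i) (update x i x') ≤ EU (u i) x + ε)
    (hE : ∑ j ∈ univ.erase i, mass x E j ≤ Δ / 4) :
    mass x (dominatedSet u Δ E) i ≤ 2 * ε / Δ := by
  set m := mass x (dominatedSet u Δ E) i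
  have hsum : ∀ j, ∑ a, x j a = 1 := fun j => (hx j).2
  have hpoint : ∀ p, m * Δ - m * (1 + Δ) * oppCount E i p ≤
      ∑ a, x i a * (∑ b, improvement u Δ E i a b * u i (update p i b) - u i (update p i a)) :=
    fun p => calc
      m * Δ - m * (1 + Δ) * oppCount E i p
          = ∑ a, x i a * (dominatedSet u Δ E).indicator
              (fun _ => Δ - (1 + Δ) * oppCount E i p) ⟨i, a⟩ := by
        rw [sum_mul_indicator_eq_mass_mul]; ring
      _ ≤ _ := sum_le_sum fun a _ =>
        mul_le_mul_of_nonneg_left (improvement_gain hu hΔ.le a p) ((hx i).1 a)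
  have hgain : m * Δ - m * (1 + Δ) * ∑ j ∈ univ.erase i, mass x E j ≤ ε :=
    calc m * Δ - m * (1 + Δ) * ∑ j ∈ univ.erase i, mass x E j
        = EU (fun p => m * Δ - m * (1 + Δ) * oppCount E i p) x := by
          rw [EU_const_sub_mul hsum, EU_oppCount hsum]
      _ ≤ _ := EU_mono hx hpoint
      _ = _ := (EU_update_sum_mul_sub (hsum i) (u i) (improvement u Δ E i)).symm
      _ ≤ ε := by
        linarith [hNash _ <| mixed.sum_mul_mem (hx i) <|
          improvement_mem_mixed (u := u) (Δ := Δ) (E := E)]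
  have hm : 0 ≤ m := mass_nonneg (hx i) _
  rw [le_div_iff₀ hΔ]
  nlinarith [mul_le_mul_of_nonneg_left hE (by positivity : 0 ≤ m * (1 + Δ)),
    mul_nonneg (mul_nonneg hm hΔ.le) (sub_nonneg.mpr hΔ1)]

end Deviation

/-- Support of an `ε`-Nash equilibrium on iteratively dominated actions: if
`ε < Δ²/(24 N² A)`, then for every player `i` and every elimination level
`l ≤ L` (the minimum elimination length), the probability that `x*_i` plays an
action in `E_l` is at most `2lε/Δ`. -/
theorem nash_support_iteratively_dominated
    {N : ℕ} {A : Fin N → Type*} [∀ i, Fintype (A i)]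
    (u : ∀ i : Fin N, (∀ j, A j) → ℝ) (hu : ∀ i p, 0 ≤ u i p ∧ u i p ≤ 1)
    (Δ ε : ℝ) (Acard : ℕ) (hcard : ∀ i, Fintype.card (A i) ≤ Acard)
    (hΔ : 0 < Δ) (hε : 0 ≤ ε) (hsmall : ε < Δ ^ 2 / (24 * N ^ 2 * Acard))
    (x : ∀ i, A i → ℝ) (hx : ∀ i, x i ∈ mixed (A i))
    (hNash : ∀ i : Fin N, ∀ x' ∈ mixed (A i),
      EU (u i) (Function.update x i x') ≤ EU (u i) x + ε) :
    ∀ i : Fin N, ∀ l : ℕ,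
      l ≤ sInf {l' : ℕ | Elim u Δ (l' + 1) = Elim u Δ l'} →
      (∑ a : A i,
        Set.indicator {a : A i | (⟨i, a⟩ : (k : Fin N) × A k) ∈ Elim u Δ l} (x i) a)
        ≤ 2 * l * ε / Δ := by
  have : ∀ j, Nonempty (A j) := fun j => mixed.nonempty (hx j)
  have hεΔ : ε * (24 * N ^ 2 * Acard) ≤ Δ ^ 2 := by
    rcases (by positivity : (0 : ℝ) ≤ 24 * N ^ 2 * Acard).eq_or_lt with h0 | hpos
    · rw [← h0, div_zero] at hsmall; linarith
    · exact ((lt_div_iff₀ hpos).mp hsmall).le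
  intro i l hl
  induction l generalizing i with
  | zero => simp [Elim]
  | succ l ih =>
    have hΔ1 := le_one_of_elimLength_pos hu (Nat.zero_lt_of_lt hl)
    have hlN : (l : ℝ) ≤ N * Acard := by
      exact_mod_cast (Nat.le_of_succ_le hl).trans (elimLength_le_mul hcard)
    have hopp : ∑ j ∈ univ.erase i, mass x (Elim u Δ l) j ≤ Δ / 4 :=
      calc ∑ j ∈ univ.erase i, mass x (Elim u Δ l) j
          ≤ #(univ.erase i) • (2 * l * ε / Δ) :=
            sum_le_card_nsmul _ _ _ fun j _ => ih j (Nat.le_of_succ_le hl)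
        _ ≤ N * (2 * l * ε / Δ) := by
          rw [nsmul_eq_mul]; gcongr; exact_mod_cast card_erase_le.trans (card_fin N).le
        _ ≤ Δ / 4 := by
          rw [mul_div_assoc', div_le_div_iff₀ hΔ (by norm_num)]
          nlinarith [mul_le_mul_of_nonneg_left hlN (by positivity : 0 ≤ 8 * N * ε)]
    calc mass x (Elim u Δ (l + 1)) i
        ≤ mass x (dominatedSet u Δ (Elim u Δ l)) i :=
          mass_mono (hx i) fun _ h => dominated_of_mem_Elim_succ h
      _ ≤ 2 * ε / Δ := mass_dominatedSet_le (hu i) hΔ hΔ1 hx (hNash i) hopp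
      _ ≤ 2 * ↑(l + 1) * ε / Δ := by gcongr; simp
end

section
/- Subgame equilibrium lifts to full game (CCE case): Suppose the restricted action sets Ã_i ⊆ A_i have the property that every action a_i ∈ A_i \ Ã_i is Δ-dominated (Δ ≥ 0) by some mixed strategy over Ã_i against every opposing profile in ∏_{j≠i} Ã_j, and dominance is iterative so that the best response of any player to any distribution over ∏_{j≠i} Ã_j lies in Ã_i up to zero loss. Then every ε-CCE of the subgame restricted to ∏_i Ã_i is also an ε-CCE of the full game. -/
/-!
Against a correlated strategy supported on `∏ j, S j`, deviating to a dominated action `a` is no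
better than deviating to the mixture `x` over `S i` that dominates it, and the payoff of that mixed
deviation is an `x`-average of payoffs of deviations inside `S i`, each of which gains at most `ε`
by the subgame condition.
-/

open Finset

section WeightedSums

variable {α : Type*} [Fintype α]

theorem sum_mul_le_sum_mul_of_le_on_support {w f g : α → ℝ} (hw : ∀ a, 0 ≤ w a)
    (hfg : ∀ a, w a ≠ 0 → f a ≤ g a) : ∑ a, w a * f a ≤ ∑ a, w a * g a := by
  refine sum_le_sum fun a _ => ?_
  by_cases ha : w a = 0
  · simp only [ha, zero_mul, le_refl]
  · exact mul_le_mul_of_nonneg_left (hfg a ha) (hw a)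

theorem sum_mul_le_of_le_on_support {w f : α → ℝ} {c : ℝ} (hw : ∀ a, 0 ≤ w a)
    (hw1 : ∑ a, w a = 1) (hf : ∀ a, w a ≠ 0 → f a ≤ c) : ∑ a, w a * f a ≤ c :=
  calc ∑ a, w a * f a ≤ ∑ a, w a * c := sum_mul_le_sum_mul_of_le_on_support hw hf
    _ = c := by rw [← sum_mul, hw1, one_mul]

end WeightedSums

theorem sum_mul_update_le_of_dominated {N : ℕ} {A : Fin N → Type*} [∀ i, Fintype (A i)]
    (u : Fin N → (∀ j, A j) → ℝ) (S : ∀ i, Finset (A i)) {i : Fin N} {a : A i}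
    {x : A i → ℝ}
    (hdom : ∀ p : ∀ j, A j, (∀ j, j ≠ i → p j ∈ S j) →
      u i (Function.update p i a) ≤ ∑ b, x b * u i (Function.update p i b))
    {μ : (∀ j, A j) → ℝ} (hμ0 : ∀ p, 0 ≤ μ p)
    (hsupp : ∀ p : ∀ j, A j, μ p ≠ 0 → ∀ j, p j ∈ S j) :
    ∑ p, μ p * u i (Function.update p i a)
      ≤ ∑ b, x b * ∑ p, μ p * u i (Function.update p i b) :=
  calc ∑ p, μ p * u i (Function.update p i a)
      ≤ ∑ p, μ p * ∑ b, x b * u i (Function.update p i b) :=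
        sum_mul_le_sum_mul_of_le_on_support hμ0 fun p hp => hdom p fun j _ => hsupp p hp j
    _ = ∑ b, x b * ∑ p, μ p * u i (Function.update p i b) := by
        simp only [mul_sum]
        rw [sum_comm]
        simp only [mul_left_comm]

theorem subgame_CCE_lifts_general {N : ℕ} {A : Fin N → Type*} [∀ i, Fintype (A i)]
    (u : ∀ i : Fin N, (∀ j, A j) → ℝ) (S : ∀ i, Finset (A i)) (ε : ℝ)
    (hdom : ∀ i : Fin N, ∀ a : A i, a ∉ S i →
      ∃ x : A i → ℝ, (∀ b, 0 ≤ x b) ∧ (∑ b, x b = 1) ∧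
        (∀ b, x b ≠ 0 → b ∈ S i) ∧
        ∀ p : ∀ j, A j, (∀ j, j ≠ i → p j ∈ S j) →
          u i (Function.update p i a) ≤ ∑ b, x b * u i (Function.update p i b))
    (μ : (∀ j, A j) → ℝ) (hμ0 : ∀ p, 0 ≤ μ p)
    (hsupp : ∀ p : ∀ j, A j, μ p ≠ 0 → ∀ j, p j ∈ S j)
    (hCCE : ∀ i : Fin N, ∀ a' ∈ S i,
      (∑ p, μ p * u i (Function.update p i a')) - ε ≤ ∑ p, μ p * u i p) :
    ∀ i : Fin N, ∀ a' : A i,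
      (∑ p, μ p * u i (Function.update p i a')) - ε ≤ ∑ p, μ p * u i p := by
  intro i a'
  by_cases ha' : a' ∈ S i
  · exact hCCE i a' ha'
  obtain ⟨x, hx0, hx1, hxS, hxdom⟩ := hdom i a' ha'
  have hmixed : ∑ b, x b * ∑ p, μ p * u i (Function.update p i b)
      ≤ ε + ∑ p, μ p * u i p :=
    sum_mul_le_of_le_on_support hx0 hx1 fun b hb => by linarith [hCCE i b (hxS b hb)]
  linarith [sum_mul_update_le_of_dominated u S hxdom hμ0 hsupp]

/-- Subgame equilibrium lifts to the full game (CCE case): if every action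
outside the restricted set `S i` is (weakly) dominated by a mixed strategy over
`S i` against all opposing profiles in the restricted sets, then every `ε`-CCE
of the subgame (a correlated strategy supported on `∏ i, S i`) is an `ε`-CCE of
the full game. -/
theorem subgame_CCE_lifts {N : ℕ} {A : Fin N → Type*} [∀ i, Fintype (A i)]
    (u : ∀ i : Fin N, (∀ j, A j) → ℝ) (S : ∀ i, Finset (A i)) (ε : ℝ)
    (hdom : ∀ i : Fin N, ∀ a : A i, a ∉ S i →
      ∃ x : A i → ℝ, (∀ b, 0 ≤ x b) ∧ (∑ b, x b = 1) ∧
        (∀ b, x b ≠ 0 → b ∈ S i) ∧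
        ∀ p : ∀ j, A j, (∀ j, j ≠ i → p j ∈ S j) →
          u i (Function.update p i a) ≤ ∑ b, x b * u i (Function.update p i b))
    (μ : (∀ j, A j) → ℝ) (hμ0 : ∀ p, 0 ≤ μ p) (hμ1 : ∑ p, μ p = 1)
    (hsupp : ∀ p : ∀ j, A j, μ p ≠ 0 → ∀ j, p j ∈ S j)
    (hCCE : ∀ i : Fin N, ∀ a' ∈ S i,
      (∑ p, μ p * u i (Function.update p i a')) - ε ≤ ∑ p, μ p * u i p) :
    ∀ i : Fin N, ∀ a' : A i,
      (∑ p, μ p * u i (Function.update p i a')) - ε ≤ ∑ p, μ p * u i p :=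
  subgame_CCE_lifts_general u S ε hdom μ hμ0 hsupp hCCE
end

section
/- Swap regret decomposes into per-expert regrets: let θ^{(1)},...,θ^{(T)} ∈ Δ(A_i) be strategies and u^{(1)},...,u^{(T)} ∈ [0,1]^{A_i} payoff vectors, and suppose for each t the fixed-point condition θ^{(t)}(a) = Σ_b θ̂^{(t)}(a|b) θ^{(t)}(b) holds for row-stochastic matrices θ̂^{(t)}. Then SwapRegret_T := sup_{φ:A_i→A_i} Σ_t Σ_b θ^{(t)}(b) u^{(t)}(φ(b)) − Σ_t ⟨θ^{(t)}, u^{(t)}⟩ satisfies SwapRegret_T ≤ Σ_{b∈A_i} Regret_T^b, where Regret_T^b := max_{a∈A_i} Σ_t θ^{(t)}(b) u^{(t)}(a) − Σ_t ⟨θ̂^{(t)}(·|b), θ^{(t)}(b) u^{(t)}⟩. -/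
open Finset

theorem sum_mul_eq_sum_sum_of_isFixedPt {α R : Type*} [Fintype α] [CommSemiring R]
    {x u : α → R} {Q : α → α → R} (hfix : ∀ a, x a = ∑ b, Q b a * x b) :
    ∑ a, x a * u a = ∑ b, ∑ a, Q b a * (x b * u a) := by
  rw [sum_comm]
  refine sum_congr rfl fun a _ => ?_
  rw [hfix a, sum_mul]
  exact sum_congr rfl fun b _ => by ring

theorem sum_apply_le_sum_iSup {ι α M : Type*} [Fintype ι] [Finite α] [AddCommMonoid M]
    [ConditionallyCompleteLattice M] [IsOrderedAddMonoid M] (f : ι → α → M) (φ : ι → α) :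
    ∑ b, f b (φ b) ≤ ∑ b, ⨆ a, f b a :=
  sum_le_sum fun b _ => le_ciSup (Set.finite_range (f b)).bddAbove (φ b)

theorem swap_regret_decomposition_general {α : Type*} [Fintype α] (T : ℕ)
    (θ : Fin T → α → ℝ) (u : Fin T → α → ℝ) (θhat : Fin T → α → α → ℝ)
    (hfix : ∀ t a, θ t a = ∑ b, θhat t b a * θ t b) :
    (⨆ φ : α → α,
        ((∑ t, ∑ b, θ t b * u t (φ b)) - ∑ t, ∑ a, θ t a * u t a))
      ≤ ∑ b, ((⨆ a : α, ∑ t, θ t b * u t a)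
          - ∑ t, ∑ a, θhat t b a * (θ t b * u t a)) := by
  have : Nonempty (α → α) := ⟨id⟩
  refine ciSup_le fun φ => ?_
  have hswap : ∑ t, ∑ b, θ t b * u t (φ b) ≤ ∑ b, ⨆ a, ∑ t, θ t b * u t a := by
    rw [sum_comm]
    exact sum_apply_le_sum_iSup (fun b a => ∑ t, θ t b * u t a) φ
  have hplay : ∑ t, ∑ a, θ t a * u t a = ∑ b, ∑ t, ∑ a, θhat t b a * (θ t b * u t a) := by
    rw [sum_congr rfl fun t _ => sum_mul_eq_sum_sum_of_isFixedPt (hfix t), sum_comm]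
  rw [sum_sub_distrib, hplay]
  exact sub_le_sub_right hswap _

/-- Blum–Mansour decomposition: under the fixed-point condition
`θ^{(t)}(a) = Σ_b θ̂^{(t)}(a|b) θ^{(t)}(b)`, the swap regret is bounded by the
sum over experts `b` of the external regret of expert `b`. -/
theorem swap_regret_decomposition {α : Type*} [Fintype α] [Nonempty α] (T : ℕ)
    (θ : Fin T → α → ℝ) (u : Fin T → α → ℝ) (θhat : Fin T → α → α → ℝ)
    (hθ : ∀ t, θ t ∈ mixed α)
    (hu : ∀ t a, 0 ≤ u t a ∧ u t a ≤ 1)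
    (hrow : ∀ t b, θhat t b ∈ mixed α)
    (hfix : ∀ t a, θ t a = ∑ b, θhat t b a * θ t b) :
    (⨆ φ : α → α,
        ((∑ t, ∑ b, θ t b * u t (φ b)) - ∑ t, ∑ a, θ t a * u t a))
      ≤ ∑ b, ((⨆ a : α, ∑ t, θ t b * u t a)
          - ∑ t, ∑ a, θhat t b a * (θ t b * u t a)) :=
  swap_regret_decomposition_general T θ u θhat hfix
end

section
/- Correctness of the iterative best-response procedure (exact version): starting from any action profile (a_1^{(0)},...,a_N^{(0)}), define inductively a_i^{(l)} to be any action satisfying u_i(a_i^{(l)}, a_{-i}^{(l-1)}) ≥ u_i(x, a_{-i}^{(l-1)}) − Δ/2 for all mixed x ∈ Δ(A_i). Then for every l ≥ 0 and every i, a_i^{(l)} survives at least l rounds of Δ-iterated dominance elimination; in particular, after L iterations (the minimum elimination length), the profile (a_1^{(L)},...,a_N^{(L)}) consists only of Δ-rationalizable actions. -/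
/-! An action that is a `Δ/2`-best response to a profile whose opponents avoid `E` cannot be
`Δ`-dominated against every such profile: at that very profile the dominating mixed strategy would
gain `Δ` over it, yet can gain at most `Δ/2`. Induction on `l` then shows that `a^{(m)}` avoids
`E_l` for all `m ≥ l`, because `a^{(m+1)}` best-responds to `a^{(m)}`. -/

section

variable {N : ℕ} {A : Fin N → Type*} [∀ i, Fintype (A i)]
  (u : ∀ i : Fin N, (∀ j, A j) → ℝ) {Δ : ℝ}

theorem not_dominated_of_bestResponse (hΔ : 0 < Δ) {E : Set ((i : Fin N) × A i)} {i : Fin N}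
    {p : ∀ j, A j} (hp : ∀ j, j ≠ i → (⟨j, p j⟩ : (k : Fin N) × A k) ∉ E) {b : A i}
    (hb : ∀ x ∈ mixed (A i),
      (∑ c, x c * u i (Function.update p i c)) - Δ / 2 ≤ u i (Function.update p i b)) :
    ¬ Dominated u Δ E i b := by
  rintro ⟨x, hx, hdom⟩
  have := hdom p hp
  have := hb x hx
  linarith

theorem notMem_elim_of_le (hΔ : 0 < Δ) {a : ℕ → ∀ j, A j}
    (hbr : ∀ l : ℕ, ∀ i : Fin N, ∀ x ∈ mixed (A i),
      (∑ b, x b * u i (Function.update (a l) i b)) - Δ / 2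
        ≤ u i (Function.update (a l) i (a (l + 1) i)))
    {l m : ℕ} (hlm : l ≤ m) (i : Fin N) :
    (⟨i, a m i⟩ : (k : Fin N) × A k) ∉ Elim u Δ l := by
  induction l generalizing m i with
  | zero => exact id
  | succ l ih =>
    obtain ⟨m, rfl⟩ : ∃ m', m = m' + 1 := ⟨m - 1, by omega⟩
    rintro (hmem | hdom)
    · exact ih (by omega) i hmem
    · exact not_dominated_of_bestResponse u hΔ (fun j _ => ih (by omega) j) (hbr m i) hdom

end

/-- Correctness of the iterative best-response procedure: if for every `l` the
action `a_i^{(l+1)}` is a `Δ/2`-best response (among mixed strategies) to the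
profile `a_{-i}^{(l)}`, then for every `l` and every player `i` the action
`a_i^{(l)}` survives at least `l` rounds of `Δ`-iterated dominance elimination;
in particular after `L` iterations (the minimum elimination length) the profile
consists only of `Δ`-rationalizable actions. -/
theorem iterative_best_response_correct
    {N : ℕ} {A : Fin N → Type*} [∀ i, Fintype (A i)]
    (u : ∀ i : Fin N, (∀ j, A j) → ℝ) (Δ : ℝ) (hΔ : 0 < Δ)
    (a : ℕ → ∀ j, A j)
    (hbr : ∀ l : ℕ, ∀ i : Fin N, ∀ x ∈ mixed (A i),
      (∑ b, x b * u i (Function.update (a l) i b)) - Δ / 2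
        ≤ u i (Function.update (a l) i (a (l + 1) i))) :
    (∀ l : ℕ, ∀ i : Fin N, (⟨i, a l i⟩ : (k : Fin N) × A k) ∉ Elim u Δ l) ∧
      (∀ i : Fin N,
        (⟨i, a (sInf {l : ℕ | Elim u Δ (l + 1) = Elim u Δ l}) i⟩ :
          (k : Fin N) × A k)
          ∉ Elim u Δ (sInf {l : ℕ | Elim u Δ (l + 1) = Elim u Δ l})) := by
  have survives (l : ℕ) (i : Fin N) : (⟨i, a l i⟩ : (k : Fin N) × A k) ∉ Elim u Δ l :=
    notMem_elim_of_le u hΔ hbr le_rfl i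
  exact ⟨survives, survives _⟩
end
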